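/- Let f : G₁ → G₂ be a surjective Γ-equivariant homomorphism of reductive algebraic groups that is non-degenerate, i.e., the identity component of ker f is a torus. Then Γ acts completely reducibly on G₁ if and only if Γ acts completely reducibly on G₂. -/

import Mathlib

/-!
Equivariance makes images and preimages of `Γ`-stable subgroups `Γ`-stable. Non-degeneracy puts
`ker f` inside every R-Levi, hence every R-parabolic subgroup of `G₁`, so `Q ↦ f Q` and
`Q ↦ f⁻¹ Q` are mutually inverse between R-parabolic subgroups of `G₁` and `G₂`, and
`f (Q ⊓ R) = f Q ⊓ f R`; thus opposite pairs correspond to opposite pairs and `Γ`-stable ones to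
`Γ`-stable ones.
-/

open Pointwise

/-- Abstract data of the family of R-parabolic and R-Levi subgroups of a
(possibly non-connected) reductive algebraic group, indexed by (equivalence
classes of) cocharacters.  The field `opp` records the opposite cocharacter
`λ ↦ -λ`, for which `L_{-λ} = L_λ` and `P_λ ∩ P_{-λ} = L_λ`. -/
structure Cochars (G : Type*) [Group G] where
  Y : Type*
  P : Y → Subgroup G
  L : Y → Subgroup G
  opp : Y → Y
  L_opp : ∀ lam, L (opp lam) = L lam
  P_inf_opp : ∀ lam, P lam ⊓ P (opp lam) = L lam

variable {G : Type*} [Group G]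

/-- `Q` is an R-parabolic subgroup of `G`. -/
def IsRParabolic (S : Cochars G) (Q : Subgroup G) : Prop := ∃ lam, Q = S.P lam

/-- `M` is an R-Levi subgroup of the R-parabolic subgroup `Q` of `G`. -/
def IsRLeviOf (S : Cochars G) (M Q : Subgroup G) : Prop :=
  ∃ lam, Q = S.P lam ∧ M = S.L lam

/-- Two R-parabolic subgroups are opposite if their intersection is an
R-Levi subgroup of each of them. -/
def OppositeR (S : Cochars G) (Q R : Subgroup G) : Prop :=
  IsRLeviOf S (Q ⊓ R) Q ∧ IsRLeviOf S (Q ⊓ R) R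

/-- A subgroup of `G` is stable under the action of `Γ`. -/
def GammaStable (Γ : Type*) [Group Γ] [MulDistribMulAction Γ G] (Q : Subgroup G) : Prop :=
  ∀ γ : Γ, γ • Q = Q

/-- The action of `Γ` on `G` is completely reducible: every `Γ`-stable
R-parabolic subgroup of `G` has a `Γ`-stable opposite R-parabolic subgroup. -/
def CRAction (S : Cochars G) (Γ : Type*) [Group Γ] [MulDistribMulAction Γ G] : Prop :=
  ∀ Q : Subgroup G, IsRParabolic S Q → GammaStable Γ Q →
    ∃ R : Subgroup G, IsRParabolic S R ∧ GammaStable Γ R ∧ OppositeR S Q R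

/-- `H` is `G`-completely reducible: whenever `H ≤ P_λ`, there is `μ` with
`P_μ = P_λ` and `H ≤ L_μ`. -/
def IsGCr (S : Cochars G) (H : Subgroup G) : Prop :=
  ∀ lam : S.Y, H ≤ S.P lam → ∃ mu : S.Y, S.P mu = S.P lam ∧ H ≤ S.L mu

namespace Subgroup

variable {G₁ G₂ : Type*} [Group G₁] [Group G₂] {f : G₁ →* G₂}

theorem map_inf_of_ker_le {A B : Subgroup G₁} (h : f.ker ≤ B) :
    (A ⊓ B).map f = A.map f ⊓ B.map f := by
  refine le_antisymm (map_inf_le A B f) ?_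
  rintro _ ⟨⟨a, ha, rfl⟩, ⟨b, hb, hfb⟩⟩
  have hba : b⁻¹ * a ∈ B := h <| by rw [MonoidHom.mem_ker, map_mul, map_inv, hfb, inv_mul_cancel]
  exact ⟨a, ⟨ha, by simpa using B.mul_mem hb hba⟩, rfl⟩

variable {Γ : Type*} [Group Γ] [MulDistribMulAction Γ G₁] [MulDistribMulAction Γ G₂]

theorem map_pointwise_smul_of_equivariant (hequiv : ∀ (γ : Γ) (g : G₁), f (γ • g) = γ • f g)
    (γ : Γ) (Q : Subgroup G₁) : (γ • Q).map f = γ • Q.map f := by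
  apply SetLike.coe_injective
  rw [coe_map, coe_pointwise_smul, coe_pointwise_smul, coe_map]
  exact Set.image_smul_comm f γ Q (hequiv γ)

theorem comap_pointwise_smul_of_equivariant (hequiv : ∀ (γ : Γ) (g : G₁), f (γ • g) = γ • f g)
    (γ : Γ) (Q : Subgroup G₂) : (γ • Q).comap f = γ • Q.comap f := by
  ext g
  rw [mem_pointwise_smul_iff_inv_smul_mem, mem_comap, mem_comap, hequiv,
    mem_pointwise_smul_iff_inv_smul_mem]

end Subgroup

section Equivariant

variable {G₁ G₂ : Type*} [Group G₁] [Group G₂]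
  {Γ : Type*} [Group Γ] [MulDistribMulAction Γ G₁] [MulDistribMulAction Γ G₂]
  {f : G₁ →* G₂}

theorem GammaStable.map (hequiv : ∀ (γ : Γ) (g : G₁), f (γ • g) = γ • f g)
    {Q : Subgroup G₁} (hQ : GammaStable Γ Q) : GammaStable Γ (Q.map f) :=
  fun γ => by rw [← Subgroup.map_pointwise_smul_of_equivariant hequiv, hQ γ]

theorem GammaStable.comap (hequiv : ∀ (γ : Γ) (g : G₁), f (γ • g) = γ • f g)
    {Q : Subgroup G₂} (hQ : GammaStable Γ Q) : GammaStable Γ (Q.comap f) :=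
  fun γ => by rw [← Subgroup.comap_pointwise_smul_of_equivariant hequiv, hQ γ]

end Equivariant

theorem Cochars.L_le_P (S : Cochars G) (lam : S.Y) : S.L lam ≤ S.P lam :=
  S.P_inf_opp lam ▸ inf_le_left

theorem OppositeR.isRParabolic_right {S : Cochars G} {Q R : Subgroup G} (h : OppositeR S Q R) :
    IsRParabolic S R :=
  h.2.imp fun _ => And.left

section Transfer

variable {G₁ G₂ : Type*} [Group G₁] [Group G₂] {S₁ : Cochars G₁} {S₂ : Cochars G₂}
  {f : G₁ →* G₂} {φ : S₁.Y → S₂.Y}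

theorem IsRParabolic.ker_le (hker : ∀ lam : S₁.Y, f.ker ≤ S₁.L lam) {Q : Subgroup G₁}
    (hQ : IsRParabolic S₁ Q) : f.ker ≤ Q := by
  obtain ⟨lam, rfl⟩ := hQ
  exact (hker lam).trans (S₁.L_le_P lam)

theorem IsRParabolic.map (hP : ∀ lam, (S₁.P lam).map f = S₂.P (φ lam)) {Q : Subgroup G₁}
    (hQ : IsRParabolic S₁ Q) : IsRParabolic S₂ (Q.map f) := by
  obtain ⟨lam, rfl⟩ := hQ
  exact ⟨φ lam, hP lam⟩

theorem IsRParabolic.comap (hcomap : ∀ mu : S₂.Y, ∃ lam : S₁.Y, S₁.P lam = (S₂.P mu).comap f)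
    {Q : Subgroup G₂} (hQ : IsRParabolic S₂ Q) : IsRParabolic S₁ (Q.comap f) := by
  obtain ⟨mu, rfl⟩ := hQ
  obtain ⟨lam, hlam⟩ := hcomap mu
  exact ⟨lam, hlam.symm⟩

theorem OppositeR.map (hP : ∀ lam, (S₁.P lam).map f = S₂.P (φ lam))
    (hL : ∀ lam, (S₁.L lam).map f = S₂.L (φ lam)) (hker : ∀ lam : S₁.Y, f.ker ≤ S₁.L lam)
    {Q R : Subgroup G₁} (h : OppositeR S₁ Q R) : OppositeR S₂ (Q.map f) (R.map f) := by
  have hinf : (Q ⊓ R).map f = Q.map f ⊓ R.map f :=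
    Subgroup.map_inf_of_ker_le (h.isRParabolic_right.ker_le hker)
  obtain ⟨⟨κ, rfl, hκ⟩, ⟨κ', rfl, hκ'⟩⟩ := h
  exact ⟨⟨φ κ, hP κ, by rw [← hinf, hκ, hL]⟩, ⟨φ κ', hP κ', by rw [← hinf, hκ', hL]⟩⟩

theorem OppositeR.comap (hcomap : ∀ mu : S₂.Y, ∃ lam : S₁.Y,
      S₁.P lam = (S₂.P mu).comap f ∧ S₁.L lam = (S₂.L mu).comap f)
    {Q R : Subgroup G₂} (h : OppositeR S₂ Q R) : OppositeR S₁ (Q.comap f) (R.comap f) := by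
  have liftLevi : ∀ {A : Subgroup G₂}, IsRLeviOf S₂ (Q ⊓ R) A →
      IsRLeviOf S₁ (Q.comap f ⊓ R.comap f) (A.comap f) := by
    rintro _ ⟨mu, rfl, hmu⟩
    obtain ⟨lam, hP, hL⟩ := hcomap mu
    exact ⟨lam, hP.symm, by rw [← Subgroup.comap_inf, hmu, hL]⟩
  exact ⟨liftLevi h.1, liftLevi h.2⟩

variable {Γ : Type*} [Group Γ] [MulDistribMulAction Γ G₁] [MulDistribMulAction Γ G₂]

theorem CRAction.map (hsurj : Function.Surjective f)
    (hequiv : ∀ (γ : Γ) (g : G₁), f (γ • g) = γ • f g)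
    (hP : ∀ lam, (S₁.P lam).map f = S₂.P (φ lam))
    (hL : ∀ lam, (S₁.L lam).map f = S₂.L (φ lam)) (hker : ∀ lam : S₁.Y, f.ker ≤ S₁.L lam)
    (hcomap : ∀ mu : S₂.Y, ∃ lam : S₁.Y,
      S₁.P lam = (S₂.P mu).comap f ∧ S₁.L lam = (S₂.L mu).comap f)
    (h : CRAction S₁ Γ) : CRAction S₂ Γ := by
  intro Q hQ hQst
  obtain ⟨R, hR, hRst, hopp⟩ :=
    h (Q.comap f) (hQ.comap fun mu => (hcomap mu).imp fun _ => And.left) (hQst.comap hequiv)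
  refine ⟨R.map f, hR.map hP, hRst.map hequiv, ?_⟩
  simpa only [Subgroup.map_comap_eq_self_of_surjective hsurj] using hopp.map hP hL hker

theorem CRAction.of_map (hequiv : ∀ (γ : Γ) (g : G₁), f (γ • g) = γ • f g)
    (hP : ∀ lam, (S₁.P lam).map f = S₂.P (φ lam)) (hker : ∀ lam : S₁.Y, f.ker ≤ S₁.L lam)
    (hcomap : ∀ mu : S₂.Y, ∃ lam : S₁.Y,
      S₁.P lam = (S₂.P mu).comap f ∧ S₁.L lam = (S₂.L mu).comap f)
    (h : CRAction S₂ Γ) : CRAction S₁ Γ := by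
  intro Q hQ hQst
  obtain ⟨R, hR, hRst, hopp⟩ := h (Q.map f) (hQ.map hP) (hQst.map hequiv)
  refine ⟨R.comap f, hR.comap fun mu => (hcomap mu).imp fun _ => And.left,
    hRst.comap hequiv, ?_⟩
  simpa only [Subgroup.comap_map_eq_self (hQ.ker_le hker)] using hopp.comap hcomap

end Transfer

theorem cr_action_iff_of_nondegenerate_surjection_general
    {G₁ G₂ : Type*} [Group G₁] [Group G₂]
    (Γ : Type*) [Group Γ] [MulDistribMulAction Γ G₁] [MulDistribMulAction Γ G₂]
    (S₁ : Cochars G₁) (S₂ : Cochars G₂)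
    (f : G₁ →* G₂) (hsurj : Function.Surjective f)
    (hequiv : ∀ (γ : Γ) (g : G₁), f (γ • g) = γ • f g)
    (φ : S₁.Y → S₂.Y)
    (hP : ∀ lam, (S₁.P lam).map f = S₂.P (φ lam))
    (hL : ∀ lam, (S₁.L lam).map f = S₂.L (φ lam))
    -- non-degeneracy of `f`:
    (hker : ∀ lam : S₁.Y, f.ker ≤ S₁.L lam)
    (hcomap : ∀ mu : S₂.Y, ∃ lam : S₁.Y,
      S₁.P lam = (S₂.P mu).comap f ∧ S₁.L lam = (S₂.L mu).comap f) :
    CRAction S₁ Γ ↔ CRAction S₂ Γ :=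
  ⟨CRAction.map hsurj hequiv hP hL hker hcomap, CRAction.of_map hequiv hP hker hcomap⟩

/-- **Lemma 2.1(ii).** Let `f : G₁ → G₂` be a surjective `Γ`-equivariant
homomorphism of reductive algebraic groups which is non-degenerate (the
identity component of `ker f` is a torus; consequently `ker f` lies in every
R-Levi subgroup of `G₁` (`hker`), and preimages of R-parabolic resp. R-Levi
subgroups of `G₂` are R-parabolic resp. R-Levi subgroups of `G₁` (`hcomap`)).
Then `Γ` acts completely reducibly on `G₁` if and only if it does on `G₂`. -/
theorem cr_action_iff_of_nondegenerate_surjection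
    {G₁ G₂ : Type*} [Group G₁] [Group G₂]
    (Γ : Type*) [Group Γ] [MulDistribMulAction Γ G₁] [MulDistribMulAction Γ G₂]
    (S₁ : Cochars G₁) (S₂ : Cochars G₂)
    (f : G₁ →* G₂) (hsurj : Function.Surjective f)
    (hequiv : ∀ (γ : Γ) (g : G₁), f (γ • g) = γ • f g)
    (φ : S₁.Y → S₂.Y)
    (hP : ∀ lam, (S₁.P lam).map f = S₂.P (φ lam))
    (hL : ∀ lam, (S₁.L lam).map f = S₂.L (φ lam))
    (hlift : ∀ mu : S₂.Y, ∃ lam : S₁.Y,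
      S₂.P (φ lam) = S₂.P mu ∧ S₂.L (φ lam) = S₂.L mu)
    -- non-degeneracy of `f`:
    (hker : ∀ lam : S₁.Y, f.ker ≤ S₁.L lam)
    (hcomap : ∀ mu : S₂.Y, ∃ lam : S₁.Y,
      S₁.P lam = (S₂.P mu).comap f ∧ S₁.L lam = (S₂.L mu).comap f) :
    CRAction S₁ Γ ↔ CRAction S₂ Γ :=
  cr_action_iff_of_nondegenerate_surjection_general Γ S₁ S₂ f hsurj hequiv φ hP hL hker hcomap
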